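/- arXiv:1410.1237 — 7 statements merged into one kernel-verified Lean document; each statement's English description precedes it below -/
import Mathlib

section
/- If vertices i and j are not adjacent (ω(i,j)=0), then the modularity gain from moving both i and j simultaneously into community C(k) equals the sum of their individual gains minus 2·k_i·k_j/(2m)², and hence is at most the sum of the individual gains: ΔQ_{{i,j}→C(k)} = ΔQ_{i→C(k)} + ΔQ_{j→C(k)} − 2·k_i·k_j/(2m)² ≤ ΔQ_{i→C(k)} + ΔQ_{j→C(k)}. -/
open Finset

variable {V : Type*} [Fintype V] [DecidableEq V]

/-- Weighted degree `k_i = ∑_{j} ω(i,j)` (edges have zero weight if absent). -/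
noncomputable def deg (ω : V → V → ℝ) (i : V) : ℝ := ∑ j, ω i j

/-- Total edge weight `m = (1/2) ∑_i k_i`. -/
noncomputable def mW (ω : V → V → ℝ) : ℝ := (∑ i, deg ω i) / 2

/-- `e_{i→C} = ∑_{j ∈ C} ω(i,j)`. -/
noncomputable def eW (ω : V → V → ℝ) (i : V) (C : Finset V) : ℝ := ∑ j ∈ C, ω i j

/-- Community degree `a_C = ∑_{i ∈ C} k_i`. -/
noncomputable def aW (ω : V → V → ℝ) (C : Finset V) : ℝ := ∑ i ∈ C, deg ω i

/-- The community (fiber) with label `ℓ` of a labelling `c`. -/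
noncomputable def commOf {α : Type*} [DecidableEq α] (c : V → α) (ℓ : α) : Finset V :=
  univ.filter (fun v => c v = ℓ)

/-- Modularity of the partition given by the labelling `c`. -/
noncomputable def Qmod {α : Type*} [Fintype α] [DecidableEq α] (ω : V → V → ℝ) (c : V → α) : ℝ :=
  (1 / (2 * mW ω)) * ∑ i, eW ω i (commOf c (c i)) -
    ∑ ℓ, (aW ω (commOf c ℓ) / (2 * mW ω)) ^ 2

/-- Louvain single-vertex move gain `ΔQ_{i→tgt}` when `i` currently lives in `src`. -/
noncomputable def dQ (ω : V → V → ℝ) (i : V) (src tgt : Finset V) : ℝ :=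
  (eW ω i tgt - eW ω i (src.erase i)) / mW ω +
    (2 * deg ω i * aW ω (src.erase i) - 2 * deg ω i * aW ω tgt) / (2 * mW ω) ^ 2

private lemma peel2 {M : Type*} [AddCommMonoid M] {i j : V} (hij : i ≠ j) (f : V → M) :
    ∑ v, f v = f i + f j + ∑ v ∈ (univ.erase i).erase j, f v := by
  rw [← Finset.add_sum_erase univ f (mem_univ i),
      ← Finset.add_sum_erase (univ.erase i) f
        (Finset.mem_erase.mpr ⟨hij.symm, mem_univ j⟩), add_assoc]

/-- If `i` and `j` are not adjacent (`ω i j = 0`) and `i`, `j`, `k` lie in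
three pairwise distinct communities, then the modularity change from moving both `i` and `j`
simultaneously into `C(k)` equals the sum of their individual gains minus
`2·k_i·k_j/(2m)²`, and hence is at most the sum of the individual gains. -/
theorem negative_gain_identity {α : Type*} [Fintype α] [DecidableEq α]
    (ω : V → V → ℝ) (hsym : ∀ a b, ω a b = ω b a) (hnn : ∀ a b, 0 ≤ ω a b)
    (hm : 0 < mW ω) (c : V → α) (i j k : V)
    (hij : ω i j = 0) (hik : c i ≠ c k) (hjk : c j ≠ c k) (hijc : c i ≠ c j) :
    Qmod ω (fun v => if v = i ∨ v = j then c k else c v) - Qmod ω c =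
        dQ ω i (commOf c (c i)) (commOf c (c k)) + dQ ω j (commOf c (c j)) (commOf c (c k)) -
          2 * deg ω i * deg ω j / (2 * mW ω) ^ 2 ∧
      Qmod ω (fun v => if v = i ∨ v = j then c k else c v) - Qmod ω c ≤
        dQ ω i (commOf c (c i)) (commOf c (c k)) + dQ ω j (commOf c (c j)) (commOf c (c k)) := by
  have hm0 : mW ω ≠ 0 := ne_of_gt hm
  have hne : i ≠ j := fun h => hijc (by rw [h])
  set c' : V → α := fun v => if v = i ∨ v = j then c k else c v with hc'def
  have hc'i : c' i = c k := by simp [hc'def]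
  have hc'j : c' j = c k := by simp [hc'def]
  have hc'o : ∀ v, v ≠ i → v ≠ j → c' v = c v := by
    intro v h1 h2; simp [hc'def, h1, h2]
  have hmem : ∀ v ∈ (univ.erase i).erase j, v ≠ i ∧ v ≠ j := by
    intro v hv
    simp only [Finset.mem_erase, Finset.mem_univ, and_true] at hv
    exact ⟨hv.2, hv.1⟩
  -- conversion lemmas
  have heW : ∀ (d : V → α) (v : V) (ℓ : α),
      eW ω v (commOf d ℓ) = ∑ w, if d w = ℓ then ω v w else 0 := by
    intro d v ℓ; simp only [eW, commOf, Finset.sum_filter]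
  have haW : ∀ (d : V → α) (ℓ : α),
      aW ω (commOf d ℓ) = ∑ v, if d v = ℓ then deg ω v else 0 := by
    intro d ℓ; simp only [aW, commOf, Finset.sum_filter]
  have hiA : i ∈ commOf c (c i) := by simp [commOf]
  have hjB : j ∈ commOf c (c j) := by simp [commOf]
  -- e-quantities in tail form
  have hTiK : eW ω i (commOf c (c k))
      = ∑ w ∈ (univ.erase i).erase j, if c w = c k then ω i w else 0 := by
    rw [heW, peel2 hne]
    simp [hik, hjk]
  have hTjK : eW ω j (commOf c (c k))
      = ∑ w ∈ (univ.erase i).erase j, if c w = c k then ω j w else 0 := by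
    rw [heW, peel2 hne]
    simp [hik, hjk]
  have hTiA : eW ω i ((commOf c (c i)).erase i)
      = ∑ w ∈ (univ.erase i).erase j, if c w = c i then ω i w else 0 := by
    have h1 : ω i i + eW ω i ((commOf c (c i)).erase i) = eW ω i (commOf c (c i)) := by
      simp only [eW]
      exact Finset.add_sum_erase _ _ hiA
    have h2 : eW ω i (commOf c (c i))
        = ω i i + ∑ w ∈ (univ.erase i).erase j, if c w = c i then ω i w else 0 := by
      rw [heW, peel2 hne]
      simp [Ne.symm hijc]
    linarith
  have hTjB : eW ω j ((commOf c (c j)).erase j)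
      = ∑ w ∈ (univ.erase i).erase j, if c w = c j then ω j w else 0 := by
    have h1 : ω j j + eW ω j ((commOf c (c j)).erase j) = eW ω j (commOf c (c j)) := by
      simp only [eW]
      exact Finset.add_sum_erase _ _ hjB
    have h2 : eW ω j (commOf c (c j))
        = ω j j + ∑ w ∈ (univ.erase i).erase j, if c w = c j then ω j w else 0 := by
      rw [heW, peel2 hne]
      simp [hijc]
    linarith
  -- flip lemma for indicator sums
  have hflip : ∀ (x : V) (ℓ : α), ∀ v ∈ (univ.erase i).erase j,
      (if ℓ = c v then ω v x else 0) = (if c v = ℓ then ω x v else 0) := by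
    intro x ℓ v _
    by_cases h : ℓ = c v
    · rw [if_pos h, if_pos h.symm, hsym]
    · rw [if_neg h, if_neg (fun hh => h hh.symm)]
  have hSold : ∑ v, eW ω v (commOf c (c v)) =
      ω i i + ω j j
      + 2 * (∑ w ∈ (univ.erase i).erase j, if c w = c i then ω i w else 0)
      + 2 * (∑ w ∈ (univ.erase i).erase j, if c w = c j then ω j w else 0)
      + ∑ v ∈ (univ.erase i).erase j, ∑ w ∈ (univ.erase i).erase j,
          (if c w = c v then ω v w else 0) := by
    calc ∑ v, eW ω v (commOf c (c v)) = ∑ v, ∑ w, if c w = c v then ω v w else 0 :=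
          Finset.sum_congr rfl fun v _ => heW c v (c v)
      _ = (∑ w, if c w = c i then ω i w else 0) + (∑ w, if c w = c j then ω j w else 0)
          + ∑ v ∈ (univ.erase i).erase j, ∑ w, (if c w = c v then ω v w else 0) :=
          peel2 hne _
      _ = _ := by
          have p1 : (∑ w, if c w = c i then ω i w else 0)
              = ω i i + ∑ w ∈ (univ.erase i).erase j, (if c w = c i then ω i w else 0) := by
            rw [peel2 hne]; simp [Ne.symm hijc]
          have p2 : (∑ w, if c w = c j then ω j w else 0)
              = ω j j + ∑ w ∈ (univ.erase i).erase j, (if c w = c j then ω j w else 0) := by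
            rw [peel2 hne]; simp [hijc]
          have p3 : ∑ v ∈ (univ.erase i).erase j, (∑ w, (if c w = c v then ω v w else 0))
              = (∑ v ∈ (univ.erase i).erase j, (if c v = c i then ω i v else 0))
                + (∑ v ∈ (univ.erase i).erase j, (if c v = c j then ω j v else 0))
                + ∑ v ∈ (univ.erase i).erase j, ∑ w ∈ (univ.erase i).erase j,
                    (if c w = c v then ω v w else 0) := by
            rw [← Finset.sum_add_distrib, ← Finset.sum_add_distrib]
            refine Finset.sum_congr rfl fun v hv => ?_
            rw [peel2 hne (f := fun w => if c w = c v then ω v w else 0),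
                hflip i (c i) v hv, hflip j (c j) v hv]
          rw [p1, p2, p3]
          ring
  have hSnew : ∑ v, eW ω v (commOf c' (c' v)) =
      ω i i + ω i j + ω j i + ω j j
      + 2 * (∑ w ∈ (univ.erase i).erase j, if c w = c k then ω i w else 0)
      + 2 * (∑ w ∈ (univ.erase i).erase j, if c w = c k then ω j w else 0)
      + ∑ v ∈ (univ.erase i).erase j, ∑ w ∈ (univ.erase i).erase j,
          (if c w = c v then ω v w else 0) := by
    calc ∑ v, eW ω v (commOf c' (c' v)) = ∑ v, ∑ w, if c' w = c' v then ω v w else 0 :=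
          Finset.sum_congr rfl fun v _ => heW c' v (c' v)
      _ = (∑ w, if c' w = c' i then ω i w else 0) + (∑ w, if c' w = c' j then ω j w else 0)
          + ∑ v ∈ (univ.erase i).erase j, ∑ w, (if c' w = c' v then ω v w else 0) :=
          peel2 hne _
      _ = _ := by
          have p1 : (∑ w, if c' w = c' i then ω i w else 0)
              = ω i i + ω i j
                + ∑ w ∈ (univ.erase i).erase j, (if c w = c k then ω i w else 0) := by
            have ht : ∑ w ∈ (univ.erase i).erase j, (if c' w = c' i then ω i w else 0)
                = ∑ w ∈ (univ.erase i).erase j, (if c w = c k then ω i w else 0) :=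
              Finset.sum_congr rfl fun w hw => by
                obtain ⟨h1, h2⟩ := hmem w hw
                rw [hc'o w h1 h2, hc'i]
            rw [peel2 hne, ht]
            simp [hc'i, hc'j]
          have p2 : (∑ w, if c' w = c' j then ω j w else 0)
              = ω j i + ω j j
                + ∑ w ∈ (univ.erase i).erase j, (if c w = c k then ω j w else 0) := by
            have ht : ∑ w ∈ (univ.erase i).erase j, (if c' w = c' j then ω j w else 0)
                = ∑ w ∈ (univ.erase i).erase j, (if c w = c k then ω j w else 0) :=
              Finset.sum_congr rfl fun w hw => by
                obtain ⟨h1, h2⟩ := hmem w hw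
                rw [hc'o w h1 h2, hc'j]
            rw [peel2 hne, ht]
            simp [hc'i, hc'j]
          have p3 : ∑ v ∈ (univ.erase i).erase j, (∑ w, (if c' w = c' v then ω v w else 0))
              = (∑ v ∈ (univ.erase i).erase j, (if c v = c k then ω i v else 0))
                + (∑ v ∈ (univ.erase i).erase j, (if c v = c k then ω j v else 0))
                + ∑ v ∈ (univ.erase i).erase j, ∑ w ∈ (univ.erase i).erase j,
                    (if c w = c v then ω v w else 0) := by
            rw [← Finset.sum_add_distrib, ← Finset.sum_add_distrib]
            refine Finset.sum_congr rfl fun v hv => ?_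
            obtain ⟨h1, h2⟩ := hmem v hv
            have e1 : (if c' i = c' v then ω v i else 0) = (if c v = c k then ω i v else 0) := by
              rw [hc'i, hc'o v h1 h2]
              exact hflip i (c k) v hv
            have e2 : (if c' j = c' v then ω v j else 0) = (if c v = c k then ω j v else 0) := by
              rw [hc'j, hc'o v h1 h2]
              exact hflip j (c k) v hv
            have e3 : ∑ w ∈ (univ.erase i).erase j, (if c' w = c' v then ω v w else 0)
                = ∑ w ∈ (univ.erase i).erase j, (if c w = c v then ω v w else 0) :=
              Finset.sum_congr rfl fun w hw => by
                obtain ⟨g1, g2⟩ := hmem w hw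
                rw [hc'o w g1 g2, hc'o v h1 h2]
            rw [peel2 hne (f := fun w => if c' w = c' v then ω v w else 0), e1, e2, e3]
          rw [p1, p2, p3]
          ring
  -- community degree values
  have ha : ∀ ℓ : α, aW ω (commOf c ℓ)
      = (if c i = ℓ then deg ω i else 0) + (if c j = ℓ then deg ω j else 0)
        + ∑ v ∈ (univ.erase i).erase j, (if c v = ℓ then deg ω v else 0) := by
    intro ℓ; rw [haW, peel2 hne]
  have ha' : ∀ ℓ : α, aW ω (commOf c' ℓ)
      = (if c k = ℓ then deg ω i else 0) + (if c k = ℓ then deg ω j else 0)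
        + ∑ v ∈ (univ.erase i).erase j, (if c v = ℓ then deg ω v else 0) := by
    intro ℓ
    rw [haW, peel2 hne]
    have ht : ∑ v ∈ (univ.erase i).erase j, (if c' v = ℓ then deg ω v else 0)
        = ∑ v ∈ (univ.erase i).erase j, (if c v = ℓ then deg ω v else 0) :=
      Finset.sum_congr rfl fun v hv => by
        obtain ⟨h1, h2⟩ := hmem v hv
        rw [hc'o v h1 h2]
    rw [hc'i, hc'j, ht]
  have hki : c k ≠ c i := fun h => hik h.symm
  have hkj : c k ≠ c j := fun h => hjk h.symm
  have hji' : c j ≠ c i := fun h => hijc h.symm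
  have hval_i : aW ω (commOf c' (c i)) = aW ω (commOf c (c i)) - deg ω i := by
    rw [ha, ha']; simp [hki, hji']
  have hval_j : aW ω (commOf c' (c j)) = aW ω (commOf c (c j)) - deg ω j := by
    rw [ha, ha']; simp [hkj, hijc]
  have hval_k : aW ω (commOf c' (c k)) = aW ω (commOf c (c k)) + deg ω i + deg ω j := by
    rw [ha, ha']; simp [hik, hjk]; ring
  have hval_o : ∀ ℓ : α, ℓ ≠ c i → ℓ ≠ c j → ℓ ≠ c k →
      aW ω (commOf c' ℓ) = aW ω (commOf c ℓ) := by
    intro ℓ h1 h2 h3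
    rw [ha, ha']; simp [Ne.symm h1, Ne.symm h2, Ne.symm h3]
  -- quadratic sum
  have hQ2 : ∑ ℓ, (aW ω (commOf c' ℓ))^2
      = (∑ ℓ, (aW ω (commOf c ℓ))^2)
        + ((aW ω (commOf c (c i)) - deg ω i)^2 - (aW ω (commOf c (c i)))^2)
        + ((aW ω (commOf c (c j)) - deg ω j)^2 - (aW ω (commOf c (c j)))^2)
        + ((aW ω (commOf c (c k)) + deg ω i + deg ω j)^2 - (aW ω (commOf c (c k)))^2) := by
    have hsub : ∑ ℓ, ((aW ω (commOf c' ℓ))^2 - (aW ω (commOf c ℓ))^2)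
        = ∑ ℓ ∈ ({c i, c j, c k} : Finset α),
            ((aW ω (commOf c' ℓ))^2 - (aW ω (commOf c ℓ))^2) := by
      refine (Finset.sum_subset (Finset.subset_univ _) ?_).symm
      intro ℓ _ hℓ
      simp only [Finset.mem_insert, Finset.mem_singleton, not_or] at hℓ
      rw [hval_o ℓ hℓ.1 hℓ.2.1 hℓ.2.2, sub_self]
    have htriple : ∑ ℓ ∈ ({c i, c j, c k} : Finset α),
        ((aW ω (commOf c' ℓ))^2 - (aW ω (commOf c ℓ))^2)
        = ((aW ω (commOf c' (c i)))^2 - (aW ω (commOf c (c i)))^2)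
          + ((aW ω (commOf c' (c j)))^2 - (aW ω (commOf c (c j)))^2)
          + ((aW ω (commOf c' (c k)))^2 - (aW ω (commOf c (c k)))^2) := by
      rw [Finset.sum_insert (by simp [hijc, hik]),
          Finset.sum_insert (by simp [hjk]), Finset.sum_singleton, add_assoc]
    have := hsub.trans htriple
    rw [hval_i, hval_j, hval_k] at this
    rw [Finset.sum_sub_distrib] at this
    linarith
  have haerase_i : aW ω ((commOf c (c i)).erase i) = aW ω (commOf c (c i)) - deg ω i := by
    have h := Finset.add_sum_erase (commOf c (c i)) (deg ω) hiA
    simp only [aW]; linarith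
  have haerase_j : aW ω ((commOf c (c j)).erase j) = aW ω (commOf c (c j)) - deg ω j := by
    have h := Finset.add_sum_erase (commOf c (c j)) (deg ω) hjB
    simp only [aW]; linarith
  have hji0 : ω j i = 0 := by rw [hsym]; exact hij
  have hmain : Qmod ω c' - Qmod ω c =
      dQ ω i (commOf c (c i)) (commOf c (c k)) + dQ ω j (commOf c (c j)) (commOf c (c k)) -
        2 * deg ω i * deg ω j / (2 * mW ω) ^ 2 := by
    simp only [Qmod, dQ, div_pow]
    rw [← Finset.sum_div, ← Finset.sum_div]
    rw [hSnew, hSold, hQ2, hTiK, hTjK, hTiA, hTjB, haerase_i, haerase_j, hij, hji0]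
    field_simp
    ring
  refine ⟨hmain, ?_⟩
  rw [hmain]
  have hdi : 0 ≤ deg ω i := by
    simp only [deg]; exact Finset.sum_nonneg fun w _ => hnn i w
  have hdj : 0 ≤ deg ω j := by
    simp only [deg]; exact Finset.sum_nonneg fun w _ => hnn j w
  have hnum : 0 ≤ 2 * deg ω i * deg ω j := by positivity
  have hden : (0:ℝ) < (2 * mW ω) ^ 2 := by positivity
  exact sub_le_self _ (div_nonneg hnum hden.le)
end

section
/- Let i be a single-degree vertex whose only incident edge is (i,j) with i ≠ j, and suppose i ∉ C(j). Then the modularity gain from moving i to C(j) satisfies ΔQ_{i→C(j)} ≥ (ω(i,j)/(2m²))·(2m − a_{C(j)}). -/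
open Finset

variable {V : Type*} [Fintype V] [DecidableEq V]

/-- If `i` is a single-degree vertex whose only incident edge is `(i,j)`,
`i ≠ j`, and `i ∉ C(j)`, then `ΔQ_{i→C(j)} ≥ (ω(i,j)/(2m²))·(2m − a_{C(j)})`. -/
theorem single_degree_gain_lower_bound {α : Type*} [Fintype α] [DecidableEq α]
    (ω : V → V → ℝ) (hsym : ∀ a b, ω a b = ω b a) (hnn : ∀ a b, 0 ≤ ω a b)
    (hm : 0 < mW ω) (c : V → α) (i j : V) (hne : i ≠ j)
    (hsingle : ∀ v, v ≠ j → ω i v = 0) (hout : c i ≠ c j) :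
    dQ ω i (commOf c (c i)) (commOf c (c j)) ≥
      ω i j / (2 * mW ω ^ 2) * (2 * mW ω - aW ω (commOf c (c j))) := by
  have hdeg : deg ω i = ω i j := by
    rw [deg, Finset.sum_eq_single j (fun b _ hb => hsingle b hb) (fun h => absurd (mem_univ j) h)]
  have hetgt : eW ω i (commOf c (c j)) = ω i j := by
    rw [eW, Finset.sum_eq_single_of_mem j (by simp [commOf]) (fun b _ hb => hsingle b hb)]
  have hesrc : eW ω i ((commOf c (c i)).erase i) = 0 := by
    apply Finset.sum_eq_zero
    intro v hv
    apply hsingle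
    rintro rfl
    exact hout ((mem_filter.mp (Finset.mem_of_mem_erase hv)).2).symm
  have ha' : 0 ≤ aW ω ((commOf c (c i)).erase i) := by
    apply Finset.sum_nonneg
    intro v _
    exact Finset.sum_nonneg (fun b _ => hnn v b)
  have hw : 0 ≤ ω i j := hnn i j
  rw [dQ, hdeg, hetgt, hesrc]
  rw [ge_iff_le, div_add_div _ _ (ne_of_gt hm) (by positivity), div_mul_eq_mul_div, div_le_div_iff₀ (by positivity) (by positivity)]
  nlinarith [mul_nonneg hw ha', sq_nonneg (mW ω), mul_pos hm hm, mul_nonneg (mul_nonneg hw ha') (le_of_lt (mul_pos hm hm))]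
end

section
/- Vertex following lemma: if i is a single-degree vertex whose only incident edge is (i,j), i ≠ j, and C(i) ≠ C(j), then ΔQ_{i→C(j)} > 0; i.e., moving i into j's community strictly increases modularity. Consequently, in any partition locally optimal for single-vertex moves, every single-degree vertex lies in the same community as its unique neighbor. -/
open Finset

variable {V : Type*} [Fintype V] [DecidableEq V]

/-- **vertex following.** If `i` is a single-degree vertex whose only incident
edge is `(i,j)` with `ω(i,j) > 0`, `i ≠ j`, then whenever `C(i) ≠ C(j)` the move of `i` into
`j`'s community has strictly positive gain; consequently in any partition that is locally
optimal for single-vertex moves, `i` lies in the same community as `j`. -/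
theorem vertex_following {α : Type*} [Fintype α] [DecidableEq α]
    (ω : V → V → ℝ) (hsym : ∀ a b, ω a b = ω b a) (hnn : ∀ a b, 0 ≤ ω a b)
    (hm : 0 < mW ω) (i j : V) (hne : i ≠ j)
    (hsingle : ∀ v, v ≠ j → ω i v = 0) (hpos : 0 < ω i j) (c : V → α) :
    (c i ≠ c j → 0 < dQ ω i (commOf c (c i)) (commOf c (c j))) ∧
      ((∀ v : V, ∀ ℓ : α, c v ≠ ℓ → dQ ω v (commOf c (c v)) (commOf c ℓ) ≤ 0) →
        c i = c j) := by
  have hdegnn : ∀ v, 0 ≤ deg ω v := fun v => Finset.sum_nonneg fun w _ => hnn v w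
  have hk : deg ω i = ω i j := by
    unfold deg
    exact Finset.sum_eq_single_of_mem j (mem_univ j) (fun v _ hv => hsingle v hv)
  have main : c i ≠ c j → 0 < dQ ω i (commOf c (c i)) (commOf c (c j)) := by
    intro hcc
    have htgt : eW ω i (commOf c (c j)) = ω i j := by
      unfold eW
      refine Finset.sum_eq_single_of_mem j ?_ (fun v _ hv => hsingle v hv)
      simp [commOf]
    have hsrc : eW ω i ((commOf c (c i)).erase i) = 0 := by
      unfold eW
      refine Finset.sum_eq_zero fun v hv => ?_
      refine hsingle v fun h => ?_
      subst h
      have := (Finset.mem_erase.mp hv).2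
      simp [commOf] at this
      exact hcc this.symm
    have hA : 0 ≤ aW ω ((commOf c (c i)).erase i) :=
      Finset.sum_nonneg fun v _ => hdegnn v
    have hB : aW ω (commOf c (c j)) ≤ 2 * mW ω - ω i j := by
      have hsub : commOf c (c j) ⊆ univ.erase i := by
        intro v hv
        simp only [commOf, mem_filter] at hv
        refine Finset.mem_erase.mpr ⟨fun h => ?_, mem_univ v⟩
        exact hcc (h ▸ hv.2)
      have h1 : aW ω (commOf c (c j)) ≤ ∑ v ∈ univ.erase i, deg ω v :=
        Finset.sum_le_sum_of_subset_of_nonneg hsub (fun v _ _ => hdegnn v)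
      have h2 : ∑ v ∈ univ.erase i, deg ω v = 2 * mW ω - ω i j := by
        have := Finset.add_sum_erase univ (deg ω) (mem_univ i)
        unfold mW
        rw [hk] at this
        linarith [this]
      linarith
    unfold dQ
    rw [htgt, hsrc, hk]
    have hm' : (0:ℝ) < 2 * mW ω := by linarith
    rw [div_add_div _ _ (ne_of_gt hm) (by positivity : ((2 * mW ω)^2 : ℝ) ≠ 0)]
    apply div_pos _ (by positivity)
    nlinarith [sq_nonneg (ω i j), mul_pos hpos hm]
  refine ⟨main, fun hopt => ?_⟩
  by_contra hcc
  exact absurd (hopt i (c j) hcc) (not_le.mpr (main hcc))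
end

section
/- Sum rule for move gains: for a vertex i and any community C with i ∉ C, the modularity after moving i from C(i) to C equals Q + ΔQ_{i→C}, where Q is the modularity of the original partition and ΔQ_{i→C} = (e_{i→C} − e_{i→C(i)∖{i}})/m + (2·k_i·a_{C(i)∖{i}} − 2·k_i·a_C)/(2m)². -/
open Finset

variable {V : Type*} [Fintype V] [DecidableEq V]

/-- **sum rule for move gains.** For a vertex `i` and a target community with
label `ℓ ≠ c i`, the modularity after moving `i` there equals `Q + ΔQ_{i→C}`. -/
theorem move_gain_sum_rule {α : Type*} [Fintype α] [DecidableEq α]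
    (ω : V → V → ℝ) (hsym : ∀ a b, ω a b = ω b a) (hnn : ∀ a b, 0 ≤ ω a b)
    (hloop : ∀ v, ω v v = 0) (hm : 0 < mW ω) (c : V → α) (i : V) (ℓ : α)
    (hne : c i ≠ ℓ) :
    Qmod ω (Function.update c i ℓ) =
      Qmod ω c + dQ ω i (commOf c (c i)) (commOf c ℓ) := by
  classical
  set c' : V → α := Function.update c i ℓ with hc'def
  have hc'i : c' i = ℓ := Function.update_self i ℓ c
  have hc't : ∀ t, t ≠ i → c' t = c t := fun t ht => Function.update_of_ne ht ℓ c
  set k : ℝ := deg ω i with hkdef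
  -- membership facts
  have hiA : i ∈ commOf c (c i) := by simp [commOf]
  have hiB : i ∉ commOf c ℓ := by simp [commOf, hne]
  -- eW over a fiber as a full sum with indicator
  have heW : ∀ (j : V) (ℓ' : α), eW ω j (commOf c ℓ') = ∑ t, if c t = ℓ' then ω j t else 0 := by
    intro j ℓ'; simp [eW, commOf, sum_filter]
  have heW' : ∀ (j : V) (ℓ' : α), eW ω j (commOf c' ℓ') = ∑ t, if c' t = ℓ' then ω j t else 0 := by
    intro j ℓ'; simp [eW, commOf, sum_filter]
  -- erased source edge weight
  have heA : eW ω i ((commOf c (c i)).erase i) = eW ω i (commOf c (c i)) := by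
    have := Finset.add_sum_erase (commOf c (c i)) (fun t => ω i t) hiA
    simp only [eW]
    linarith [this, hloop i]
  -- the difference kernel
  set h : V → V → ℝ := fun j t =>
    (if c' t = c' j then ω j t else 0) - (if c t = c j then ω j t else 0) with hhdef
  have hrow : ∀ t, h i t = (if c t = ℓ then ω i t else 0) - (if c t = c i then ω i t else 0) := by
    intro t
    by_cases ht : t = i
    · subst ht; simp [hhdef, hloop]
    · simp [hhdef, hc't t ht, hc'i]
  have hzero : ∀ j t, j ≠ i → t ≠ i → h j t = 0 := by
    intro j t hj ht; simp [hhdef, hc't j hj, hc't t ht]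
  have hsymh : ∀ j t, h j t = h t j := by
    intro j t
    simp only [hhdef, hsym j t]
    congr 1 <;> · congr 1; simp [eq_comm]
  have hhii : h i i = 0 := by rw [hrow]; simp [hloop i]
  -- the inner row sum at i
  have hrowsum : (∑ t, h i t) = eW ω i (commOf c ℓ) - eW ω i ((commOf c (c i)).erase i) := by
    rw [heA, heW i ℓ, heW i (c i), ← Finset.sum_sub_distrib]
    exact Finset.sum_congr rfl fun t _ => hrow t
  -- the double sum
  have hdouble : (∑ j, ∑ t, h j t) = 2 * (∑ t, h i t) := by
    have hinner : ∀ j, j ≠ i → (∑ t, h j t) = h j i := by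
      intro j hj
      exact Finset.sum_eq_single_of_mem i (mem_univ i) (fun t _ ht => hzero j t hj ht)
    calc (∑ j, ∑ t, h j t)
        = (∑ t, h i t) + ∑ j ∈ univ.erase i, ∑ t, h j t := by
          rw [← Finset.add_sum_erase univ _ (mem_univ i)]
      _ = (∑ t, h i t) + ∑ j ∈ univ.erase i, h i j := by
          congr 1
          refine Finset.sum_congr rfl fun j hj => ?_
          rw [hinner j (Finset.ne_of_mem_erase hj), hsymh]
      _ = (∑ t, h i t) + ∑ j, h i j := by
          congr 1
          rw [← Finset.add_sum_erase univ _ (mem_univ i), hhii, zero_add]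
      _ = 2 * (∑ t, h i t) := by ring
  -- edge sum rule
  have hEsum : (∑ j, eW ω j (commOf c' (c' j))) =
      (∑ j, eW ω j (commOf c (c j))) +
        2 * (eW ω i (commOf c ℓ) - eW ω i ((commOf c (c i)).erase i)) := by
    have : (∑ j, eW ω j (commOf c' (c' j))) - (∑ j, eW ω j (commOf c (c j)))
        = ∑ j, ∑ t, h j t := by
      rw [← Finset.sum_sub_distrib]
      refine Finset.sum_congr rfl fun j _ => ?_
      rw [heW' j (c' j), heW j (c j), ← Finset.sum_sub_distrib]
    rw [hdouble, hrowsum] at this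
    linarith
  -- fibers of c'
  have hcommA : commOf c' (c i) = (commOf c (c i)).erase i := by
    ext v
    by_cases hv : v = i
    · subst hv; simp [commOf, hc'i, hne.symm]
    · simp [commOf, hc't v hv, hv]
  have hcommB : commOf c' ℓ = insert i (commOf c ℓ) := by
    ext v
    by_cases hv : v = i
    · subst hv; simp [commOf, hc'i]
    · simp [commOf, hc't v hv, hv]
  have hcommO : ∀ ℓ', ℓ' ≠ c i → ℓ' ≠ ℓ → commOf c' ℓ' = commOf c ℓ' := by
    intro ℓ' h1 h2
    ext v
    by_cases hv : v = i
    · subst hv; simp [commOf, hc'i, Ne.symm h2, Ne.symm h1]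
    · simp [commOf, hc't v hv]
  -- aW values
  have haA : aW ω (commOf c' (c i)) = aW ω (commOf c (c i)) - k := by
    rw [hcommA]
    have := Finset.add_sum_erase (commOf c (c i)) (deg ω) hiA
    simp only [aW]; linarith
  have haB : aW ω (commOf c' ℓ) = aW ω (commOf c ℓ) + k := by
    rw [hcommB]
    simp only [aW]
    rw [Finset.sum_insert hiB]; ring
  have haAe : aW ω ((commOf c (c i)).erase i) = aW ω (commOf c (c i)) - k := by
    rw [← hcommA, haA]
  -- degree-squared sums
  set m : ℝ := mW ω with hmdef
  have hasum : (∑ ℓ', (aW ω (commOf c' ℓ') / (2 * m)) ^ 2) =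
      (∑ ℓ', (aW ω (commOf c ℓ') / (2 * m)) ^ 2) +
        (2 * k ^ 2 - 2 * k * aW ω (commOf c (c i)) + 2 * k * aW ω (commOf c ℓ)) / (2 * m) ^ 2 := by
    set g : α → ℝ := fun ℓ' =>
      (aW ω (commOf c' ℓ') / (2 * m)) ^ 2 - (aW ω (commOf c ℓ') / (2 * m)) ^ 2 with hgdef
    have hgz : ∀ ℓ', ℓ' ∉ ({c i, ℓ} : Finset α) → g ℓ' = 0 := by
      intro ℓ' hℓ'
      simp only [mem_insert, mem_singleton, not_or] at hℓ'
      simp [hgdef, hcommO ℓ' hℓ'.1 hℓ'.2]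
    have hsub : (∑ ℓ', g ℓ') = ∑ ℓ' ∈ ({c i, ℓ} : Finset α), g ℓ' := by
      refine (Finset.sum_subset (Finset.subset_univ _) ?_).symm
      intro x _ hx; exact hgz x hx
    have hpair : (∑ ℓ' ∈ ({c i, ℓ} : Finset α), g ℓ') = g (c i) + g ℓ :=
      Finset.sum_pair hne
    have hdiff : (∑ ℓ', (aW ω (commOf c' ℓ') / (2 * m)) ^ 2) -
        (∑ ℓ', (aW ω (commOf c ℓ') / (2 * m)) ^ 2) = g (c i) + g ℓ := by
      rw [← hpair, ← hsub, ← Finset.sum_sub_distrib]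
    have hgci : g (c i) = ((aW ω (commOf c (c i)) - k) ^ 2 - aW ω (commOf c (c i)) ^ 2) / (2 * m) ^ 2 := by
      simp only [hgdef, haA]; field_simp
    have hgl : g ℓ = ((aW ω (commOf c ℓ) + k) ^ 2 - aW ω (commOf c ℓ) ^ 2) / (2 * m) ^ 2 := by
      simp only [hgdef, haB]; field_simp
    have hm' : (2 * m) ^ 2 ≠ 0 := by positivity
    have halg : ((aW ω (commOf c (c i)) - k) ^ 2 - aW ω (commOf c (c i)) ^ 2) / (2 * m) ^ 2 +
        ((aW ω (commOf c ℓ) + k) ^ 2 - aW ω (commOf c ℓ) ^ 2) / (2 * m) ^ 2 =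
        (2 * k ^ 2 - 2 * k * aW ω (commOf c (c i)) + 2 * k * aW ω (commOf c ℓ)) / (2 * m) ^ 2 := by
      field_simp; ring
    rw [hgci, hgl] at hdiff
    linarith
  -- assemble
  have hmne : m ≠ 0 := ne_of_gt hm
  simp only [Qmod, dQ, ← hc'def, ← hmdef, ← hkdef]
  rw [hEsum, hasum, haAe]
  field_simp
  ring
end

section
/- Collapsing preserves modularity: given a partition P of G, construct the condensed graph G' whose vertices are the communities of P, with ω'(C,C) equal to twice the total intra-community edge weight of C (self-loop convention so that the self-loop contributes 2·e_int(C) to the degree of the meta-vertex) and ω'(C,D) = total inter-community edge weight between C and D. Then the weighted degree of meta-vertex C in G' equals a_C, the total edge weight m' = m, and the modularity in G' of the singleton partition of meta-vertices equals the modularity of P in G. -/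
open Finset

variable {V : Type*} [Fintype V] [DecidableEq V]

/-- Total intra-community edge weight of `C`, each (loopless) edge counted once. -/
noncomputable def eInt (ω : V → V → ℝ) (C : Finset V) : ℝ :=
  (∑ u ∈ C, ∑ v ∈ C, ω u v) / 2

/-- The condensed graph of a partition `c`: one meta-vertex per label, with a self-loop of
weight `2·e_int(C)` at `C` and weight `ω'(C,D)` the total inter-community weight. -/
noncomputable def condensed {α : Type*} [DecidableEq α] (ω : V → V → ℝ) (c : V → α) :
    α → α → ℝ :=
  fun ℓ ℓ' => if ℓ = ℓ' then 2 * eInt ω (commOf c ℓ)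
    else ∑ u ∈ commOf c ℓ, ∑ v ∈ commOf c ℓ', ω u v


lemma condensed_eq {α : Type*} [DecidableEq α] (ω : V → V → ℝ) (c : V → α) (ℓ ℓ' : α) :
    condensed ω c ℓ ℓ' = ∑ u ∈ commOf c ℓ, ∑ v ∈ commOf c ℓ', ω u v := by
  unfold condensed eInt
  split
  · next h => subst h; ring
  · rfl

lemma fiber_sum {α : Type*} [Fintype α] [DecidableEq α] (c : V → α) (g : V → ℝ) :
    ∑ ℓ, ∑ u ∈ commOf c ℓ, g u = ∑ u, g u := by
  simpa [commOf] using Finset.sum_fiberwise (Finset.univ : Finset V) c g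

lemma deg_condensed {α : Type*} [Fintype α] [DecidableEq α] (ω : V → V → ℝ) (c : V → α)
    (ℓ : α) : deg (condensed ω c) ℓ = aW ω (commOf c ℓ) := by
  unfold deg aW
  simp only [condensed_eq]
  rw [Finset.sum_comm]
  exact Finset.sum_congr rfl fun u _ => by
    simpa [deg] using fiber_sum c (fun v => ω u v)

/-- **collapsing preserves modularity.** In the condensed graph the weighted
degree of the meta-vertex `C` equals `a_C`, the total edge weight equals `m`, and the
modularity of the singleton partition of meta-vertices equals the modularity of `c` in `G`. -/
theorem condensed_preserves_modularity {α : Type*} [Fintype α] [DecidableEq α]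
    (ω : V → V → ℝ) (hsym : ∀ a b, ω a b = ω b a) (hnn : ∀ a b, 0 ≤ ω a b)
    (hloop : ∀ v, ω v v = 0) (hm : 0 < mW ω) (c : V → α) :
    (∀ ℓ : α, deg (condensed ω c) ℓ = aW ω (commOf c ℓ)) ∧
      mW (condensed ω c) = mW ω ∧
      Qmod (condensed ω c) (id : α → α) = Qmod ω c := by
  have hdeg := deg_condensed ω c
  have hmW : mW (condensed ω c) = mW ω := by
    unfold mW aW at *
    rw [Finset.sum_congr rfl fun ℓ _ => hdeg ℓ]
    rw [fiber_sum c (deg ω)]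
  refine ⟨hdeg, hmW, ?_⟩
  have hcomm : ∀ ℓ : α, commOf (id : α → α) ℓ = {ℓ} := by
    intro ℓ; ext x; simp [commOf, eq_comm]
  have h1 : ∑ ℓ : α, eW (condensed ω c) ℓ (commOf (id : α → α) ((id : α → α) ℓ))
      = ∑ i, eW ω i (commOf c (c i)) := by
    have : ∀ ℓ : α, eW (condensed ω c) ℓ (commOf (id : α → α) ((id : α → α) ℓ))
        = ∑ u ∈ commOf c ℓ, eW ω u (commOf c ℓ) := by
      intro ℓ
      simp only [id_eq, hcomm, eW, Finset.sum_singleton, condensed_eq]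
    rw [Finset.sum_congr rfl fun ℓ _ => this ℓ]
    have := fiber_sum c (fun u => eW ω u (commOf c (c u)))
    rw [← this]
    refine Finset.sum_congr rfl fun ℓ _ => Finset.sum_congr rfl fun u hu => ?_
    simp only [commOf, Finset.mem_filter] at hu
    rw [hu.2]
  have h2 : ∀ ℓ : α, aW (condensed ω c) (commOf (id : α → α) ℓ) = aW ω (commOf c ℓ) := by
    intro ℓ
    rw [hcomm]
    simp [aW, hdeg]
  unfold Qmod
  rw [hmW, h1]
  congr 1
  exact Finset.sum_congr rfl fun ℓ _ => by rw [h2]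
end

section
/- If every community in partition P' refines to partition P by merging two communities C₁ and C₂, then Q(P) − Q(P') = w(C₁,C₂)/m − 2·(a_{C₁}/2m)·(a_{C₂}/2m), where w(C₁,C₂) is the total edge weight between C₁ and C₂. In particular, merging two communities increases modularity iff w(C₁,C₂)·2m > a_{C₁}·a_{C₂}. -/
open Finset

variable {V : Type*} [Fintype V] [DecidableEq V]

/-- Merging the two communities labelled `ℓ₁ ≠ ℓ₂` changes the modularity
by exactly `w(C₁,C₂)/m − 2·(a_{C₁}/2m)·(a_{C₂}/2m)`; in particular the merge increases
modularity iff `w(C₁,C₂)·2m > a_{C₁}·a_{C₂}`. -/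
theorem merge_gain {α : Type*} [Fintype α] [DecidableEq α]
    (ω : V → V → ℝ) (hsym : ∀ a b, ω a b = ω b a) (hnn : ∀ a b, 0 ≤ ω a b)
    (hloop : ∀ v, ω v v = 0) (hm : 0 < mW ω) (c : V → α) (ℓ₁ ℓ₂ : α) (hne : ℓ₁ ≠ ℓ₂) :
    Qmod ω (fun v => if c v = ℓ₂ then ℓ₁ else c v) - Qmod ω c =
        (∑ u ∈ commOf c ℓ₁, ∑ v ∈ commOf c ℓ₂, ω u v) / mW ω -
          2 * (aW ω (commOf c ℓ₁) / (2 * mW ω)) * (aW ω (commOf c ℓ₂) / (2 * mW ω)) ∧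
      (Qmod ω c < Qmod ω (fun v => if c v = ℓ₂ then ℓ₁ else c v) ↔
        (∑ u ∈ commOf c ℓ₁, ∑ v ∈ commOf c ℓ₂, ω u v) * (2 * mW ω) >
          aW ω (commOf c ℓ₁) * aW ω (commOf c ℓ₂)) := by
  classical
  set c' : V → α := fun v => if c v = ℓ₂ then ℓ₁ else c v with hc'
  set C₁ : Finset V := commOf c ℓ₁ with hC₁
  set C₂ : Finset V := commOf c ℓ₂ with hC₂
  set m := mW ω with hmdef
  have hm0 : m ≠ 0 := ne_of_gt hm
  have hdisj : Disjoint C₁ C₂ := by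
    rw [hC₁, hC₂, commOf, commOf, Finset.disjoint_filter]
    intro v _ h1 h2
    exact hne (h1 ▸ h2)
  have hA : commOf c' ℓ₁ = C₁ ∪ C₂ := by
    ext v
    simp only [hC₁, hC₂, commOf, mem_filter, mem_union, mem_univ, true_and, hc']
    by_cases h : c v = ℓ₂ <;> simp [h]
  have hB : commOf c' ℓ₂ = (∅ : Finset V) := by
    ext v
    simp only [commOf, mem_filter, mem_univ, true_and, hc', notMem_empty, iff_false]
    by_cases h : c v = ℓ₂ <;> simp [h, hne]
  have hCeq : ∀ ℓ, ℓ ≠ ℓ₁ → ℓ ≠ ℓ₂ → commOf c' ℓ = commOf c ℓ := by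
    intro ℓ h1 h2
    ext v
    simp only [commOf, mem_filter, mem_univ, true_and, hc']
    by_cases h : c v = ℓ₂ <;> simp [h, Ne.symm h1, Ne.symm h2]
  have hw : ∑ i ∈ C₂, eW ω i C₁ = ∑ u ∈ C₁, ∑ v ∈ C₂, ω u v := by
    rw [Finset.sum_comm]
    exact Finset.sum_congr rfl fun i _ => Finset.sum_congr rfl fun j _ => hsym i j
  set w := ∑ u ∈ C₁, ∑ v ∈ C₂, ω u v with hwdef
  -- first sum
  have hsum1 : ∑ i, eW ω i (commOf c' (c' i)) = ∑ i, eW ω i (commOf c (c i)) + 2 * w := by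
    have key : ∀ i : V, eW ω i (commOf c' (c' i)) = eW ω i (commOf c (c i)) +
        ((if c i = ℓ₁ then eW ω i C₂ else 0) + (if c i = ℓ₂ then eW ω i C₁ else 0)) := by
      intro i
      by_cases h1 : c i = ℓ₁
      · have hc'i : c' i = ℓ₁ := by simp [hc', h1, hne]
        rw [hc'i, hA, h1, ← hC₁, eW, Finset.sum_union hdisj]
        simp [h1, hne, eW]
      · by_cases h2 : c i = ℓ₂
        · have hc'i : c' i = ℓ₁ := by simp [hc', h2]
          rw [hc'i, hA, h2, ← hC₂, eW, Finset.sum_union hdisj]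
          simp [h1, h2, hne, Ne.symm hne, eW]
          ring
        · have hc'i : c' i = c i := by simp [hc', h2]
          rw [hc'i, hCeq _ h1 h2]
          simp [h1, h2]
    have e1 : (∑ x, if c x = ℓ₁ then eW ω x C₂ else 0) = w := by
      rw [← Finset.sum_filter]
      exact Finset.sum_congr rfl fun _ _ => rfl
    have e2 : (∑ x, if c x = ℓ₂ then eW ω x C₁ else 0) = w := by
      rw [← Finset.sum_filter, ← hw]
      exact Finset.sum_congr rfl fun _ _ => rfl
    rw [Finset.sum_congr rfl fun i _ => key i, Finset.sum_add_distrib,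
      Finset.sum_add_distrib, e1, e2]
    ring
  -- squared sums
  have ha12 : aW ω (C₁ ∪ C₂) = aW ω C₁ + aW ω C₂ := by
    rw [aW, Finset.sum_union hdisj]; rfl
  have hsq : ∑ ℓ, aW ω (commOf c' ℓ) ^ 2 =
      ∑ ℓ, aW ω (commOf c ℓ) ^ 2 + 2 * aW ω C₁ * aW ω C₂ := by
    have hsub : ∑ ℓ, (aW ω (commOf c' ℓ) ^ 2 - aW ω (commOf c ℓ) ^ 2)
        = 2 * aW ω C₁ * aW ω C₂ := by
      rw [← Finset.sum_subset (Finset.subset_univ ({ℓ₁, ℓ₂} : Finset α))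
        (fun ℓ _ hℓ => ?_)]
      · rw [Finset.sum_pair hne, hA, hB, ha12, hC₂]
        simp [aW]
        ring
      · simp only [mem_insert, mem_singleton, not_or] at hℓ
        rw [hCeq ℓ hℓ.1 hℓ.2, sub_self]
    rw [Finset.sum_sub_distrib] at hsub
    linarith
  have key : Qmod ω c' - Qmod ω c = w / m - 2 * (aW ω C₁ / (2 * m)) * (aW ω C₂ / (2 * m)) := by
    rw [Qmod, Qmod]
    simp only [div_pow, ← Finset.sum_div, ← hmdef]
    rw [hsum1, hsq]
    field_simp
    ring
  refine ⟨key, ?_⟩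
  rw [show (Qmod ω c < Qmod ω c') ↔ 0 < Qmod ω c' - Qmod ω c from (sub_pos).symm, key]
  have hrw : w / m - 2 * (aW ω C₁ / (2 * m)) * (aW ω C₂ / (2 * m))
      = (w * (2 * m) - aW ω C₁ * aW ω C₂) / (2 * m ^ 2) := by
    field_simp
  rw [hrw, gt_iff_lt, lt_div_iff₀ (by positivity), zero_mul, sub_pos]
end

section
/- In a distance-1 coloring of a graph, any set of vertices of the same color forms an independent set; consequently, if two same-colored vertices i and j concurrently move into a third community C(k), then ω(i,j)=0 and the joint gain satisfies ΔQ_{{i,j}→C(k)} = ΔQ_{i→C(k)} + ΔQ_{j→C(k)} − 2·k_i·k_j/(2m)², which can be negative even when both individual gains are positive (e.g., when each individual gain is less than k_i·k_j/(2m)²). -/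
open Finset

variable {V : Type*} [Fintype V] [DecidableEq V]

/-- Joint modularity gain `ΔQ_{{i,j}→C(k)}`:
`ΔQ_{i→C(k)} + ΔQ_{j→C(k)} + ω(i,j)/m − 2·k_i·k_j/(2m)²`. -/
noncomputable def jointDQ (ω : V → V → ℝ) (i j : V) (gi gj : ℝ) : ℝ :=
  gi + gj + ω i j / mW ω - 2 * deg ω i * deg ω j / (2 * mW ω) ^ 2

/-- In a distance-1 coloring, same-colored vertices form an independent
set; hence for two distinct same-colored vertices `i`, `j` moving concurrently into a third
community we have `ω(i,j) = 0`, the joint gain equals the sum of individual gains minus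
`2·k_i·k_j/(2m)²`, and it is negative whenever both (positive) individual gains are each less
than `k_i·k_j/(2m)²`. -/
theorem coloring_joint_gain {α : Type*} [Fintype α] [DecidableEq α]
    (ω : V → V → ℝ) (hsym : ∀ a b, ω a b = ω b a) (hnn : ∀ a b, 0 ≤ ω a b)
    (hm : 0 < mW ω) (col : V → ℕ)
    (hcol : ∀ u v : V, u ≠ v → ω u v ≠ 0 → col u ≠ col v)
    (c : V → α) (i j k : V) (hne : i ≠ j) (hsame : col i = col j)
    (hik : c i ≠ c k) (hjk : c j ≠ c k) (hijc : c i ≠ c j) :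
    ω i j = 0 ∧
      jointDQ ω i j (dQ ω i (commOf c (c i)) (commOf c (c k)))
          (dQ ω j (commOf c (c j)) (commOf c (c k))) =
        dQ ω i (commOf c (c i)) (commOf c (c k)) +
          dQ ω j (commOf c (c j)) (commOf c (c k)) -
          2 * deg ω i * deg ω j / (2 * mW ω) ^ 2 ∧
      (0 < dQ ω i (commOf c (c i)) (commOf c (c k)) →
        0 < dQ ω j (commOf c (c j)) (commOf c (c k)) →
        dQ ω i (commOf c (c i)) (commOf c (c k)) <
          deg ω i * deg ω j / (2 * mW ω) ^ 2 →
        dQ ω j (commOf c (c j)) (commOf c (c k)) <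
          deg ω i * deg ω j / (2 * mW ω) ^ 2 →
        jointDQ ω i j (dQ ω i (commOf c (c i)) (commOf c (c k)))
          (dQ ω j (commOf c (c j)) (commOf c (c k))) < 0) := by
  have hω : ω i j = 0 := by
    by_contra h
    exact hcol i j hne h hsame
  refine ⟨hω, ?_, ?_⟩
  · simp [jointDQ, hω]
  · intro _ _ h1 h2
    have := add_lt_add h1 h2
    simp only [jointDQ, hω, zero_div, add_zero]
    have h3 : 2 * deg ω i * deg ω j / (2 * mW ω) ^ 2 =
        deg ω i * deg ω j / (2 * mW ω) ^ 2 + deg ω i * deg ω j / (2 * mW ω) ^ 2 := by ring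
    linarith
end
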